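/- arXiv:2304.02809 — 3 statements merged into one kernel-verified Lean document; each statement's English description precedes it below -/
import Mathlib

section
/- Let (V, l, r) be a representation of a Leibniz algebra g, and let r̄ : (g⊕V) ⊗ (g⊕V) → g⊕V be defined by r̄(x+u, y+v) = r_y u. Then r̄ satisfies the Maurer–Cartan equation ∂r̄ − (1/2)[r̄, r̄]_B = 0, where ∂ is the Loday–Pirashvili coboundary of the Leibniz algebra g ⋉_{(l,0)} V with coefficients in its adjoint representation; explicitly, for all x+u, y+v, z+w in g⊕V: l_x r_z v − l_y r_z u − r_z l_x v + r_{[y,z]_g} u − r_{[x,z]_g} v − r_z r_y u = 0. -/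
/-- Maurer–Cartan equation for `r̄` on `g ⋉_{(l,0)} V`: explicitly, for all `x,y,z,u,v,w`,
`l_x r_z v − l_y r_z u − r_z l_x v + r_{[y,z]_g} u − r_{[x,z]_g} v − r_z r_y u = 0`. -/
theorem stmt4 {k g V : Type*} [Field k] [AddCommGroup g] [Module k g]
    [AddCommGroup V] [Module k V]
    (b : g →ₗ[k] g →ₗ[k] g)
    (hLeib : ∀ x y z, b x (b y z) = b (b x y) z + b y (b x z))
    (l r : g →ₗ[k] Module.End k V)
    (hl : ∀ x y, l (b x y) = l x * l y - l y * l x)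
    (hr : ∀ x y, r (b x y) = l x * r y - r y * l x)
    (hlr : ∀ x y, r y * l x = -(r y * r x)) :
    ∀ (x y z : g) (u v w : V),
      l x (r z v) - l y (r z u) - r z (l x v) + r (b y z) u - r (b x z) v - r z (r y u) = 0 := by
  intro x y z u v w
  have h1 : r (b x z) v = l x (r z v) - r z (l x v) := by
    rw [hr]; simp [Module.End.mul_apply]
  have h2 : r (b y z) u = l y (r z u) - r z (l y u) := by
    rw [hr]; simp [Module.End.mul_apply]
  have h3 : r z (l y u) = -(r z (r y u)) := by
    have := congrArg (fun f => f u) (hlr y z)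
    simpa [Module.End.mul_apply] using this
  rw [h1, h2, h3]
  abel
end

section
/- For a linear map φ : V → gl(V), the graph G_φ = {φ(u) + u : u ∈ V} is a Leibniz subalgebra of the omni-Lie algebra ol(V) if and only if [φ(u), φ(v)] = φ(φ(u)v) for all u, v ∈ V. -/
/-- The omni-Lie bracket on `gl(V) ⊕ V`. -/
def omniBracket {k V : Type*} [Field k] [AddCommGroup V] [Module k V]
    (p q : Module.End k V × V) : Module.End k V × V :=
  (p.1 * q.1 - q.1 * p.1, p.1 q.2)

/-- The graph of a linear map `φ : V → gl(V)` is a Leibniz subalgebra of the omni-Lie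
algebra `ol(V)` iff `[φ(u), φ(v)] = φ(φ(u)v)` for all `u, v`. -/
theorem stmt7 {k V : Type*} [Field k] [AddCommGroup V] [Module k V]
    (φ : V →ₗ[k] Module.End k V) :
    (∀ p ∈ {p : Module.End k V × V | p.1 = φ p.2},
      ∀ q ∈ {p : Module.End k V × V | p.1 = φ p.2},
        omniBracket p q ∈ {p : Module.End k V × V | p.1 = φ p.2}) ↔
    (∀ u v, φ u * φ v - φ v * φ u = φ (φ u v)) := by
  constructor
  · intro h u v
    exact h (φ u, u) rfl (φ v, v) rfl
  · intro h p hp q hq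
    simp only [Set.mem_setOf_eq] at *
    simp only [omniBracket, hp, hq]
    exact h p.2 q.2
end

section
/- Let φ : V → gl(V) satisfy [φ(u),φ(v)] = φ(φ(u)v), and let ρ = φ∘θ + θ : g → ol(V) be an omni-representation with image in the graph G_φ. Define l_x u = φ(θ(x))u and r_x u = φ(u)θ(x). Then (V, l, r) is a representation of g in the sense of Loday–Pirashvili, i.e., l_{[x,y]} = [l_x,l_y], r_{[x,y]} = [l_x,r_y], and r_y∘l_x = −r_y∘r_x. -/
/-- If `φ` is an embedding tensor and `ρ = φ∘θ + θ : g → ol(V)` is an omni-representation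
with image in the graph of `φ`, then `l_x u = φ(θ(x))u`, `r_x u = φ(u)θ(x)` define a
Loday–Pirashvili representation of `g` on `V`. -/
theorem stmt17 {k g V : Type*} [Field k] [AddCommGroup g] [Module k g]
    [AddCommGroup V] [Module k V]
    (b : g →ₗ[k] g →ₗ[k] g)
    (hLeib : ∀ x y z, b x (b y z) = b (b x y) z + b y (b x z))
    (φ : V →ₗ[k] Module.End k V)
    (hφ : ∀ u v, φ u * φ v - φ v * φ u = φ (φ u v))
    (θ : g →ₗ[k] V)
    (hρ : ∀ x y, ((φ (θ (b x y)) : Module.End k V), θ (b x y)) =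
      omniBracket ((φ (θ x) : Module.End k V), θ x) ((φ (θ y) : Module.End k V), θ y))
    (l r : g → Module.End k V)
    (hl : ∀ x, l x = φ (θ x))
    (hr : ∀ x, r x = (φ : V →ₗ[k] Module.End k V).flip (θ x)) :
    (∀ x y, l (b x y) = l x * l y - l y * l x) ∧
    (∀ x y, r (b x y) = l x * r y - r y * l x) ∧
    (∀ x y, r y * l x = -(r y * r x)) := by
  have h1 : ∀ x y, (φ (θ (b x y)) : Module.End k V) =
      φ (θ x) * φ (θ y) - φ (θ y) * φ (θ x) := fun x y =>
    congrArg Prod.fst (hρ x y)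
  have h2 : ∀ x y, θ (b x y) = φ (θ x) (θ y) := fun x y =>
    congrArg Prod.snd (hρ x y)
  have hφ' : ∀ u v w, φ u (φ v w) - φ v (φ u w) = φ (φ u v) w := by
    intro u v w
    have := congrArg (fun A : Module.End k V => A w) (hφ u v)
    simpa using this
  refine ⟨fun x y => by rw [hl, hl, hl, h1], fun x y => ?_, fun x y => ?_⟩
  · ext u
    simp only [hr, hl, LinearMap.flip_apply, Module.End.mul_apply, h2,
      LinearMap.sub_apply]
    have := hφ' (θ x) u (θ y)
    rw [← this]; abel
  · ext u
    simp only [hr, hl, LinearMap.flip_apply, Module.End.mul_apply,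
      LinearMap.neg_apply]
    rw [← hφ' (θ x) u (θ y), ← hφ' u (θ x) (θ y)]
    abel
end
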